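/- Let M ∈ ℝ^{n×n} be symmetric positive definite, let C := {y ∈ ℝⁿ : yᵀMy ≤ 1}, let P ∈ ℝ^{d×n} with P Pᵀ = I_d, let x ∈ C, and let g ∈ ℝⁿ with Pg ≠ 0. Set A := P M Pᵀ, b := P M x, and δ := 1 − xᵀMx + bᵀA⁻¹b, and assume δ > 0. Let s be a minimizer of y ↦ ⟨g, y⟩ over the affine section C ∩ (x + range(Pᵀ)), and set d := s − x and gap := ⟨g, x − s⟩. Then the minimizer is s = x + Pᵀz* with z* = −A⁻¹b − √δ · A⁻¹Pg / √((Pg)ᵀA⁻¹(Pg)), and gap ≥ (λ_min(A)/(2·√(δ·λ_max(A)))) · ‖Pg‖ · ‖d‖². -/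

import Mathlib

/-!
Writing a point of the section as `x + Pᵀz` and completing the square with `w = z + A⁻¹b`, the
constraint `yᵀMy ≤ 1` becomes `wᵀAw ≤ δ`, and `⟨g, y⟩ = ⟨g, x⟩ + ⟨Pg, w⟩ + const`. So the
problem is to minimize `⟨q, ·⟩`, `q = Pg`, over the centred ellipsoid `{w | wᵀAw ≤ δ}`, whose
minimizer `w* = -√(δ/γ) A⁻¹q`, `γ = qᵀA⁻¹q`, is explicit. Expanding the square, every `u` in the
ellipsoid satisfies `√γ (u - w*)ᵀA(u - w*) ≤ 2√δ ⟨q, u - w*⟩`, with equality on the boundary.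
Applied to a minimizer this forces `u = w*`; applied to `u = A⁻¹b`, the image of `x`, it bounds
the gap, and the constant follows from `λ_min ‖v‖² ≤ vᵀAv` and `‖q‖² ≤ λ_max · qᵀA⁻¹q`.
-/

open Matrix

noncomputable def norR {m : Type*} [Fintype m] (x : m → ℝ) : ℝ :=
  Real.sqrt (∑ i, x i * x i)

/-- Smallest Rayleigh quotient (for symmetric matrices, the smallest eigenvalue). -/
noncomputable def lamMin {k : ℕ} (A : Matrix (Fin k) (Fin k) ℝ) : ℝ :=
  ⨅ x : {x : Fin k → ℝ // ∑ i, x i * x i = 1}, (x : Fin k → ℝ) ⬝ᵥ A.mulVec x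

/-- Largest Rayleigh quotient (for symmetric matrices, the largest eigenvalue). -/
noncomputable def lamMax {k : ℕ} (A : Matrix (Fin k) (Fin k) ℝ) : ℝ :=
  ⨆ x : {x : Fin k → ℝ // ∑ i, x i * x i = 1}, (x : Fin k → ℝ) ⬝ᵥ A.mulVec x

lemma Matrix.PosDef.isSymm {n : Type*} {A : Matrix n n ℝ} (hA : A.PosDef) : A.IsSymm :=
  isHermitian_iff_isSymm.mp hA.isHermitian

lemma Matrix.mulVec_nonsing_inv_mulVec {n R : Type*} [Fintype n] [DecidableEq n] [CommRing R]
    {A : Matrix n n R} (h : IsUnit A.det) (v : n → R) : A *ᵥ A⁻¹ *ᵥ v = v := by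
  rw [mulVec_mulVec, mul_nonsing_inv A h, one_mulVec]

lemma dotProduct_self_nonneg {n : Type*} [Fintype n] (v : n → ℝ) : 0 ≤ v ⬝ᵥ v := by
  simpa using dotProduct_self_star_nonneg v

lemma dotProduct_self_pos {n : Type*} [Fintype n] {v : n → ℝ} (hv : v ≠ 0) : 0 < v ⬝ᵥ v := by
  simpa using dotProduct_star_self_pos_iff.mpr hv

lemma norR_sq {n : Type*} [Fintype n] (v : n → ℝ) : norR v ^ 2 = v ⬝ᵥ v :=
  Real.sq_sqrt (dotProduct_self_nonneg v)

section QuadraticForm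

variable {m n R : Type*} [Fintype m] [Fintype n] [CommRing R]

lemma Matrix.IsSymm.dotProduct_mulVec_comm {A : Matrix n n R} (hA : A.IsSymm) (u v : n → R) :
    u ⬝ᵥ A *ᵥ v = v ⬝ᵥ A *ᵥ u := by
  rw [dotProduct_mulVec, ← mulVec_transpose, hA.eq, dotProduct_comm]

lemma Matrix.IsSymm.quadForm_add {A : Matrix n n R} (hA : A.IsSymm) (u v : n → R) :
    (u + v) ⬝ᵥ A *ᵥ (u + v) = u ⬝ᵥ A *ᵥ u + 2 * (u ⬝ᵥ A *ᵥ v) + v ⬝ᵥ A *ᵥ v := by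
  rw [mulVec_add, dotProduct_add, add_dotProduct, add_dotProduct, hA.dotProduct_mulVec_comm v u]
  ring

lemma transpose_mulVec_dotProduct (P : Matrix m n R) (z : m → R) (v : n → R) :
    (Pᵀ *ᵥ z) ⬝ᵥ v = z ⬝ᵥ P *ᵥ v := by
  rw [mulVec_transpose, dotProduct_mulVec]

lemma transpose_mulVec_dotProduct_self [DecidableEq m] {P : Matrix m n R} (hP : P * Pᵀ = 1)
    (z : m → R) : (Pᵀ *ᵥ z) ⬝ᵥ (Pᵀ *ᵥ z) = z ⬝ᵥ z := by
  rw [transpose_mulVec_dotProduct, mulVec_mulVec, hP, one_mulVec]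

lemma Matrix.IsSymm.quadForm_add_transpose_mulVec {M : Matrix n n R} (hM : M.IsSymm)
    (P : Matrix m n R) (x : n → R) (z : m → R) :
    (x + Pᵀ *ᵥ z) ⬝ᵥ M *ᵥ (x + Pᵀ *ᵥ z) =
      x ⬝ᵥ M *ᵥ x + 2 * ((P *ᵥ M *ᵥ x) ⬝ᵥ z) + z ⬝ᵥ (P * M * Pᵀ) *ᵥ z := by
  have hcross : x ⬝ᵥ M *ᵥ Pᵀ *ᵥ z = (P *ᵥ M *ᵥ x) ⬝ᵥ z := by
    rw [hM.dotProduct_mulVec_comm, transpose_mulVec_dotProduct, dotProduct_comm]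
  rw [hM.quadForm_add, hcross, transpose_mulVec_dotProduct]
  simp only [mulVec_mulVec, Matrix.mul_assoc]

lemma Matrix.IsSymm.quadForm_add_inv_mulVec [DecidableEq n] {A : Matrix n n R} (hA : A.IsSymm)
    (hdet : IsUnit A.det) (z b : n → R) :
    (z + A⁻¹ *ᵥ b) ⬝ᵥ A *ᵥ (z + A⁻¹ *ᵥ b) = z ⬝ᵥ A *ᵥ z + 2 * (b ⬝ᵥ z) + b ⬝ᵥ A⁻¹ *ᵥ b := by
  rw [hA.quadForm_add, mulVec_nonsing_inv_mulVec hdet, dotProduct_comm z b,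
    dotProduct_comm (A⁻¹ *ᵥ b) b]

end QuadraticForm

lemma Matrix.PosDef.mul_mul_transpose_of_mul_transpose_eq_one {m n : Type*} [Fintype m]
    [Fintype n] [DecidableEq m] {M : Matrix n n ℝ} (hM : M.PosDef) {P : Matrix m n ℝ}
    (hP : P * Pᵀ = 1) : (P * M * Pᵀ).PosDef := by
  have hinj : Function.Injective P.vecMul := fun u v h => by
    simpa [vecMul_vecMul, hP] using congrArg (· ᵥ* Pᵀ) h
  simpa using hM.mul_mul_conjTranspose_same hinj

lemma Matrix.PosDef.two_mul_dotProduct_sub_le {n : Type*} [Fintype n] [DecidableEq n]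
    {A : Matrix n n ℝ} (hA : A.PosDef) (q v : n → ℝ) :
    2 * (q ⬝ᵥ v) - v ⬝ᵥ A *ᵥ v ≤ q ⬝ᵥ A⁻¹ *ᵥ q := by
  have hnonneg := hA.posSemidef.dotProduct_mulVec_nonneg (v + -(A⁻¹ *ᵥ q))
  rw [star_trivial, hA.isSymm.quadForm_add, mulVec_neg,
    mulVec_nonsing_inv_mulVec hA.det_pos.ne'.isUnit] at hnonneg
  simp only [dotProduct_neg, neg_dotProduct, neg_neg] at hnonneg
  rw [dotProduct_comm v q, dotProduct_comm (A⁻¹ *ᵥ q) q] at hnonneg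
  linarith

lemma Matrix.PosDef.dotProduct_inv_mulVec_pos {n : Type*} [Fintype n] [DecidableEq n]
    {A : Matrix n n ℝ} (hA : A.PosDef) {q : n → ℝ} (hq : q ≠ 0) : 0 < q ⬝ᵥ A⁻¹ *ᵥ q := by
  simpa using hA.inv.dotProduct_mulVec_pos hq

section Rayleigh

variable {k : ℕ}

lemma isCompact_range_rayleigh (A : Matrix (Fin k) (Fin k) ℝ) :
    IsCompact (Set.range fun x : {x : Fin k → ℝ // ∑ i, x i * x i = 1} =>
      (x : Fin k → ℝ) ⬝ᵥ A *ᵥ x) := by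
  have hsphere : IsCompact {x : Fin k → ℝ | x ⬝ᵥ x = 1} := by
    refine Metric.isCompact_of_isClosed_isBounded
      (isClosed_eq (continuous_id.dotProduct continuous_id) continuous_const) ?_
    refine (Metric.isBounded_closedBall (x := 0) (r := 1)).subset fun x hx => ?_
    rw [mem_closedBall_zero_iff, pi_norm_le_iff_of_nonneg zero_le_one]
    intro i
    rw [Real.norm_eq_abs, abs_le_one_iff_mul_self_le_one, ← hx.out]
    exact Finset.single_le_sum (fun j _ => mul_self_nonneg (x j)) (Finset.mem_univ i)
  have himage := hsphere.image
    (continuous_id.dotProduct (continuous_const.matrix_mulVec (A := fun _ => A) continuous_id))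
  rwa [Set.image_eq_range] at himage

lemma exists_eq_smul_unit {v : Fin k → ℝ} (hv : v ≠ 0) :
    ∃ (u : {x : Fin k → ℝ // ∑ i, x i * x i = 1}) (c : ℝ), v = c • (u : Fin k → ℝ) := by
  have hvv := dotProduct_self_pos hv
  have hc : √(v ⬝ᵥ v) ≠ 0 := (Real.sqrt_pos.mpr hvv).ne'
  refine ⟨⟨(√(v ⬝ᵥ v))⁻¹ • v, ?_⟩, √(v ⬝ᵥ v), by rw [smul_smul, mul_inv_cancel₀ hc, one_smul]⟩
  change ((√(v ⬝ᵥ v))⁻¹ • v) ⬝ᵥ ((√(v ⬝ᵥ v))⁻¹ • v) = 1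
  rw [smul_dotProduct, dotProduct_smul, smul_eq_mul, smul_eq_mul, ← mul_assoc, ← mul_inv,
    Real.mul_self_sqrt hvv.le, inv_mul_cancel₀ hvv.ne']

lemma smul_dotProduct_mulVec_smul (A : Matrix (Fin k) (Fin k) ℝ) (c : ℝ) (u : Fin k → ℝ) :
    (c • u) ⬝ᵥ A *ᵥ (c • u) = c * c * (u ⬝ᵥ A *ᵥ u) := by
  rw [mulVec_smul, smul_dotProduct, dotProduct_smul, smul_eq_mul, smul_eq_mul, mul_assoc]

lemma smul_unit_dotProduct_self (u : {x : Fin k → ℝ // ∑ i, x i * x i = 1}) (c : ℝ) :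
    (c • (u : Fin k → ℝ)) ⬝ᵥ (c • (u : Fin k → ℝ)) = c * c := by
  rw [smul_dotProduct, dotProduct_smul, dotProduct, u.2, smul_eq_mul, smul_eq_mul, mul_one]

lemma lamMin_mul_dotProduct_self_le (A : Matrix (Fin k) (Fin k) ℝ) (v : Fin k → ℝ) :
    lamMin A * (v ⬝ᵥ v) ≤ v ⬝ᵥ A *ᵥ v := by
  rcases eq_or_ne v 0 with rfl | hv
  · simp
  obtain ⟨u, c, rfl⟩ := exists_eq_smul_unit hv
  rw [smul_dotProduct_mulVec_smul, smul_unit_dotProduct_self, mul_comm]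
  exact mul_le_mul_of_nonneg_left (ciInf_le (isCompact_range_rayleigh A).bddBelow u)
    (mul_self_nonneg c)

lemma dotProduct_mulVec_le_lamMax_mul (A : Matrix (Fin k) (Fin k) ℝ) (v : Fin k → ℝ) :
    v ⬝ᵥ A *ᵥ v ≤ lamMax A * (v ⬝ᵥ v) := by
  rcases eq_or_ne v 0 with rfl | hv
  · simp
  obtain ⟨u, c, rfl⟩ := exists_eq_smul_unit hv
  rw [smul_dotProduct_mulVec_smul, smul_unit_dotProduct_self, mul_comm (lamMax A)]
  exact mul_le_mul_of_nonneg_left (le_ciSup (isCompact_range_rayleigh A).bddAbove u)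
    (mul_self_nonneg c)

lemma lamMin_nonneg {A : Matrix (Fin k) (Fin k) ℝ} (hA : A.PosSemidef) : 0 ≤ lamMin A :=
  Real.iInf_nonneg fun x => by simpa using hA.dotProduct_mulVec_nonneg (x : Fin k → ℝ)

lemma lamMax_pos {A : Matrix (Fin k) (Fin k) ℝ} (hA : A.PosDef) {v : Fin k → ℝ} (hv : v ≠ 0) :
    0 < lamMax A := by
  have hpos : 0 < v ⬝ᵥ A *ᵥ v := by simpa using hA.dotProduct_mulVec_pos hv
  exact pos_of_mul_pos_left (hpos.trans_le (dotProduct_mulVec_le_lamMax_mul A v))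
    (dotProduct_self_nonneg v)

lemma dotProduct_self_le_lamMax_mul {A : Matrix (Fin k) (Fin k) ℝ} (hA : A.PosDef)
    (q : Fin k → ℝ) : q ⬝ᵥ q ≤ lamMax A * (q ⬝ᵥ A⁻¹ *ᵥ q) := by
  rcases eq_or_ne q 0 with rfl | hq
  · simp
  have hmax_pos := lamMax_pos hA hq
  -- test the dual bound against `v = q / λ_max`
  have hdual := hA.two_mul_dotProduct_sub_le q ((lamMax A)⁻¹ • q)
  rw [smul_dotProduct_mulVec_smul, dotProduct_smul, smul_eq_mul] at hdual
  have hmax := mul_le_mul_of_nonneg_left (dotProduct_mulVec_le_lamMax_mul A q)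
    (inv_nonneg.mpr hmax_pos.le)
  have hinv : (lamMax A)⁻¹ * lamMax A = 1 := inv_mul_cancel₀ hmax_pos.ne'
  linear_combination mul_le_mul_of_nonneg_left hdual hmax_pos.le + hmax +
    ((lamMax A)⁻¹ * (q ⬝ᵥ A *ᵥ q) - q ⬝ᵥ q) * hinv

end Rayleigh

section EllipsoidLMO

variable {ι : Type*} [Fintype ι] [DecidableEq ι] {A : Matrix ι ι ℝ} {δ : ℝ} {q : ι → ℝ}

/-- The minimizer of `⟨q, ·⟩` over the ellipsoid `{w | wᵀ A w ≤ δ}`. -/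
noncomputable def ellipsoidLMO (A : Matrix ι ι ℝ) (δ : ℝ) (q : ι → ℝ) : ι → ℝ :=
  -((√δ / √(q ⬝ᵥ A⁻¹ *ᵥ q)) • A⁻¹ *ᵥ q)

lemma quadForm_ellipsoidLMO (hA : A.PosDef) (hδ : 0 ≤ δ) (hq : q ≠ 0) :
    ellipsoidLMO A δ q ⬝ᵥ A *ᵥ ellipsoidLMO A δ q = δ := by
  have hγ := hA.dotProduct_inv_mulVec_pos hq
  rw [ellipsoidLMO, mulVec_neg, neg_dotProduct, dotProduct_neg, neg_neg, mulVec_smul,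
    mulVec_nonsing_inv_mulVec hA.det_pos.ne'.isUnit, smul_dotProduct, dotProduct_smul,
    smul_eq_mul, smul_eq_mul, dotProduct_comm _ q, ← mul_assoc, div_mul_div_comm,
    Real.mul_self_sqrt hδ, Real.mul_self_sqrt hγ.le, div_mul_cancel₀ _ hγ.ne']

lemma quadForm_sub_ellipsoidLMO_le (hA : A.PosDef) (hδ : 0 < δ) (hq : q ≠ 0) {u : ι → ℝ}
    (hu : u ⬝ᵥ A *ᵥ u ≤ δ) :
    √(q ⬝ᵥ A⁻¹ *ᵥ q) * ((u - ellipsoidLMO A δ q) ⬝ᵥ A *ᵥ (u - ellipsoidLMO A δ q)) ≤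
      2 * √δ * (q ⬝ᵥ (u - ellipsoidLMO A δ q)) := by
  have hγ := hA.dotProduct_inv_mulVec_pos hq
  set γ := q ⬝ᵥ A⁻¹ *ᵥ q with hγ_def
  set t := √δ / √γ with ht_def
  have hρ : √γ * √γ = γ := Real.mul_self_sqrt hγ.le
  have hσ : √δ * √δ = δ := Real.mul_self_sqrt hδ.le
  have htρ : t * √γ = √δ := div_mul_cancel₀ _ (Real.sqrt_pos.mpr hγ).ne'
  rw [ellipsoidLMO, ← ht_def, sub_neg_eq_add, hA.isSymm.quadForm_add, mulVec_smul,
    mulVec_nonsing_inv_mulVec hA.det_pos.ne'.isUnit]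
  simp only [dotProduct_add, dotProduct_smul, smul_dotProduct, smul_eq_mul]
  rw [dotProduct_comm (A⁻¹ *ᵥ q) q, ← hγ_def, dotProduct_comm u q]
  clear_value t
  rw [← htρ] at hσ ⊢
  linear_combination √γ * hu + √γ * t * t * hρ - √γ * hσ

lemma eq_ellipsoidLMO_of_dotProduct_le (hA : A.PosDef) (hδ : 0 < δ) (hq : q ≠ 0) {u : ι → ℝ}
    (hu : u ⬝ᵥ A *ᵥ u ≤ δ) (hle : q ⬝ᵥ u ≤ q ⬝ᵥ ellipsoidLMO A δ q) :
    u = ellipsoidLMO A δ q := by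
  have hcurv := quadForm_sub_ellipsoidLMO_le hA hδ hq hu
  have hγ := Real.sqrt_pos.mpr (hA.dotProduct_inv_mulVec_pos hq)
  rw [dotProduct_sub] at hcurv
  by_contra hne
  have hpos := hA.dotProduct_mulVec_pos (sub_ne_zero.mpr hne)
  rw [star_trivial] at hpos
  exact (mul_pos hγ hpos).not_ge <|
    hcurv.trans (mul_nonpos_of_nonneg_of_nonpos (by positivity) (sub_nonpos.mpr hle))

end EllipsoidLMO

lemma le_dotProduct_sub_ellipsoidLMO {k : ℕ} {A : Matrix (Fin k) (Fin k) ℝ} (hA : A.PosDef)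
    {δ : ℝ} (hδ : 0 < δ) {q : Fin k → ℝ} (hq : q ≠ 0) {u : Fin k → ℝ} (hu : u ⬝ᵥ A *ᵥ u ≤ δ) :
    lamMin A / (2 * √(δ * lamMax A)) * norR q *
        ((u - ellipsoidLMO A δ q) ⬝ᵥ (u - ellipsoidLMO A δ q)) ≤
      q ⬝ᵥ (u - ellipsoidLMO A δ q) := by
  set d := u - ellipsoidLMO A δ q
  set γ := q ⬝ᵥ A⁻¹ *ᵥ q
  have hmax_pos := lamMax_pos hA hq
  have hmin_nonneg := lamMin_nonneg hA.posSemidef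
  have hd := dotProduct_self_nonneg d
  have hnorm : norR q ≤ √(lamMax A) * √γ := by
    rw [← Real.sqrt_mul hmax_pos.le]
    exact Real.sqrt_le_sqrt (dotProduct_self_le_lamMax_mul hA q)
  have hcurv := quadForm_sub_ellipsoidLMO_le hA hδ hq hu
  rw [Real.sqrt_mul hδ.le]
  calc lamMin A / (2 * (√δ * √(lamMax A))) * norR q * (d ⬝ᵥ d)
      ≤ lamMin A / (2 * (√δ * √(lamMax A))) * (√(lamMax A) * √γ) * (d ⬝ᵥ d) := by gcongr
    _ = √γ / (2 * √δ) * (lamMin A * (d ⬝ᵥ d)) := by field_simp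
    _ ≤ √γ / (2 * √δ) * (d ⬝ᵥ A *ᵥ d) := by gcongr; exact lamMin_mul_dotProduct_self_le A d
    _ ≤ q ⬝ᵥ d := by
        rw [div_mul_eq_mul_div, div_le_iff₀ (by positivity)]
        linarith

/-- Exact LMO on a random ellipsoidal section and the section curvature bound.
For `M ≻ 0`, `C = {y : yᵀMy ≤ 1}`, `P Pᵀ = I_d`, `x ∈ C`, `Pg ≠ 0`,
`A = PMPᵀ`, `b = PMx`, `δ = 1 − xᵀMx + bᵀA⁻¹b > 0`: if `s` minimizes `⟨g,·⟩`
over the section `C ∩ (x + range Pᵀ)`, then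
`s = x + Pᵀz*` with `z* = −A⁻¹b − (√δ/√((Pg)ᵀA⁻¹Pg)) A⁻¹Pg`, and
`gap = ⟨g, x − s⟩ ≥ (λ_min(A)/(2√(δ λ_max(A)))) ‖Pg‖ ‖s − x‖²`. -/
theorem ellipsoid_section_lmo {n d : ℕ} (M : Matrix (Fin n) (Fin n) ℝ)
    (hM : M.PosDef) (P : Matrix (Fin d) (Fin n) ℝ) (hP : P * Pᵀ = 1)
    (x : Fin n → ℝ) (hx : x ⬝ᵥ M.mulVec x ≤ 1)
    (g : Fin n → ℝ) (hPg : P.mulVec g ≠ 0)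
    (hδ : 0 < 1 - x ⬝ᵥ M.mulVec x +
      (P.mulVec (M.mulVec x)) ⬝ᵥ (P * M * Pᵀ)⁻¹.mulVec (P.mulVec (M.mulVec x)))
    (s : Fin n → ℝ)
    (hsC : s ⬝ᵥ M.mulVec s ≤ 1) (hsU : ∃ z : Fin d → ℝ, s = x + Pᵀ.mulVec z)
    (hmin : ∀ y : Fin n → ℝ, y ⬝ᵥ M.mulVec y ≤ 1 →
      (∃ z : Fin d → ℝ, y = x + Pᵀ.mulVec z) → g ⬝ᵥ s ≤ g ⬝ᵥ y) :
    s = x + Pᵀ.mulVec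
        (-(P * M * Pᵀ)⁻¹.mulVec (P.mulVec (M.mulVec x)) -
          (Real.sqrt (1 - x ⬝ᵥ M.mulVec x +
              (P.mulVec (M.mulVec x)) ⬝ᵥ (P * M * Pᵀ)⁻¹.mulVec (P.mulVec (M.mulVec x))) /
            Real.sqrt ((P.mulVec g) ⬝ᵥ (P * M * Pᵀ)⁻¹.mulVec (P.mulVec g))) •
          (P * M * Pᵀ)⁻¹.mulVec (P.mulVec g)) ∧
      lamMin (P * M * Pᵀ) /
          (2 * Real.sqrt ((1 - x ⬝ᵥ M.mulVec x +
              (P.mulVec (M.mulVec x)) ⬝ᵥ (P * M * Pᵀ)⁻¹.mulVec (P.mulVec (M.mulVec x))) *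
            lamMax (P * M * Pᵀ))) *
          norR (P.mulVec g) * norR (s - x) ^ 2 ≤
        g ⬝ᵥ (x - s) := by
  obtain ⟨z, rfl⟩ := hsU
  set A := P * M * Pᵀ
  set b := P *ᵥ M *ᵥ x
  set q := P *ᵥ g
  set δ := 1 - x ⬝ᵥ M *ᵥ x + b ⬝ᵥ A⁻¹ *ᵥ b with hδ_def
  have hA : A.PosDef := hM.mul_mul_transpose_of_mul_transpose_eq_one hP
  have hsec (z : Fin d → ℝ) : (x + Pᵀ *ᵥ z) ⬝ᵥ M *ᵥ (x + Pᵀ *ᵥ z) =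
      (z + A⁻¹ *ᵥ b) ⬝ᵥ A *ᵥ (z + A⁻¹ *ᵥ b) + (1 - δ) := by
    rw [hM.isSymm.quadForm_add_transpose_mulVec,
      hA.isSymm.quadForm_add_inv_mulVec hA.det_pos.ne'.isUnit, hδ_def]
    ring
  have hlin (z : Fin d → ℝ) : g ⬝ᵥ (x + Pᵀ *ᵥ z) = g ⬝ᵥ x + q ⬝ᵥ z := by
    rw [dotProduct_add, dotProduct_comm g (Pᵀ *ᵥ z), transpose_mulVec_dotProduct, dotProduct_comm z]
  set w := ellipsoidLMO A δ q with hw_def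
  have hz : z = w - A⁻¹ *ᵥ b := by
    refine eq_sub_of_add_eq (eq_ellipsoidLMO_of_dotProduct_le hA hδ hPg (by linarith [hsec z]) ?_)
    have hw := quadForm_ellipsoidLMO hA hδ.le hPg
    have hcomp := hmin (x + Pᵀ *ᵥ (w - A⁻¹ *ᵥ b)) (by rw [hsec, sub_add_cancel, hw]; linarith)
      ⟨_, rfl⟩
    rw [hlin, hlin, dotProduct_sub] at hcomp
    rw [dotProduct_add]
    linarith
  refine ⟨by rw [hz, hw_def, ellipsoidLMO]; congr 2; abel, ?_⟩
  have hx_mem : (A⁻¹ *ᵥ b) ⬝ᵥ A *ᵥ (A⁻¹ *ᵥ b) ≤ δ := by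
    have hx0 := hsec 0
    rw [mulVec_zero, add_zero, zero_add] at hx0
    linarith
  have hgap : g ⬝ᵥ (x - (x + Pᵀ *ᵥ z)) = q ⬝ᵥ (A⁻¹ *ᵥ b - w) := by
    rw [dotProduct_sub, hlin, hz, dotProduct_sub, dotProduct_sub]
    ring
  have hnorm : norR (x + Pᵀ *ᵥ z - x) ^ 2 = (A⁻¹ *ᵥ b - w) ⬝ᵥ (A⁻¹ *ᵥ b - w) := by
    rw [add_sub_cancel_left, norR_sq, transpose_mulVec_dotProduct_self hP, hz, ← neg_sub,
      dotProduct_neg, neg_dotProduct, neg_neg]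
  rw [hgap, hnorm]
  exact le_dotProduct_sub_ellipsoidLMO hA hδ hPg hx_mem
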